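/- Tightness and Helly's theorem imply sequential compactness: if (μ_n) is a tight sequence of probability measures on ℝ (for every ε > 0 there is a compact interval [a,b] with μ_n([a,b]) > 1 − ε for all n), then (μ_n) has a subsequence converging weakly to some probability measure μ. -/

import Mathlib

open MeasureTheory Filter Topology

noncomputable def cdf' (μ : Measure ℝ) (x : ℝ) : ℝ := (μ (Set.Iic x)).toReal

def WeakConv (μs : ℕ → Measure ℝ) (μ : Measure ℝ) : Prop :=
  ∀ x : ℝ, ContinuousAt (cdf' μ) x →
    Tendsto (fun n => cdf' (μs n) x) atTop (𝓝 (cdf' μ x))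

lemma cdf'_nonneg (μ : Measure ℝ) (x : ℝ) : 0 ≤ cdf' μ x := ENNReal.toReal_nonneg

lemma cdf'_le_one (μ : Measure ℝ) [IsProbabilityMeasure μ] (x : ℝ) : cdf' μ x ≤ 1 := by
  have h := ENNReal.toReal_mono ENNReal.one_ne_top (prob_le_one (μ := μ) (s := Set.Iic x))
  simpa [cdf'] using h

lemma cdf'_mono (μ : Measure ℝ) [IsProbabilityMeasure μ] : Monotone (cdf' μ) := fun a b hab =>
  ENNReal.toReal_mono (measure_ne_top μ _) (measure_mono (Set.Iic_subset_Iic.2 hab))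

lemma cdf'_add_Icc_le (μ : Measure ℝ) [IsProbabilityMeasure μ] {x a b : ℝ} (h : x < a) :
    cdf' μ x + (μ (Set.Icc a b)).toReal ≤ 1 := by
  have hd : Disjoint (Set.Iic x) (Set.Icc a b) := by
    rw [Set.disjoint_left]
    intro y hy hy2
    exact absurd (hy.trans_lt h) (not_lt.2 hy2.1)
  have hu : μ (Set.Iic x) + μ (Set.Icc a b) ≤ 1 := by
    rw [← measure_union hd measurableSet_Icc]
    exact prob_le_one
  have := ENNReal.toReal_mono ENNReal.one_ne_top hu
  rwa [ENNReal.toReal_add (measure_ne_top μ _) (measure_ne_top μ _), ENNReal.toReal_one] at this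

lemma Icc_le_cdf' (μ : Measure ℝ) [IsProbabilityMeasure μ] {x a b : ℝ} (h : b ≤ x) :
    (μ (Set.Icc a b)).toReal ≤ cdf' μ x :=
  ENNReal.toReal_mono (measure_ne_top μ _) (measure_mono fun y hy => hy.2.trans h)

theorem tight_sequentially_compact (μs : ℕ → Measure ℝ)
    [∀ n, IsProbabilityMeasure (μs n)]
    (htight : ∀ ε > (0 : ℝ), ∃ a b : ℝ, ∀ n, ((μs n) (Set.Icc a b)).toReal > 1 - ε) :
    ∃ (φ : ℕ → ℕ) (μ : Measure ℝ), StrictMono φ ∧ IsProbabilityMeasure μ ∧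
      WeakConv (fun k => μs (φ k)) μ := by
  classical
  haveI : CompactSpace (Set.Icc (0:ℝ) 1) := isCompact_iff_compactSpace.mp isCompact_Icc
  set g : ℕ → (ℚ → Set.Icc (0:ℝ) 1) :=
    fun n q => ⟨cdf' (μs n) q, cdf'_nonneg _ _, cdf'_le_one _ _⟩ with hgdef
  obtain ⟨L, φ, hφ, hLg⟩ := CompactSpace.tendsto_subseq g
  set G : ℚ → ℝ := fun q => (L q : ℝ) with hGdef
  have hG : ∀ q : ℚ, Tendsto (fun k => cdf' (μs (φ k)) q) atTop (𝓝 (G q)) := by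
    intro q
    have h1 : Tendsto (fun k => g (φ k) q) atTop (𝓝 (L q)) :=
      ((continuous_apply q).tendsto L).comp hLg
    exact (continuous_subtype_val.tendsto (L q)).comp h1
  have hG0 : ∀ q : ℚ, 0 ≤ G q := fun q => (L q).2.1
  have hG1 : ∀ q : ℚ, G q ≤ 1 := fun q => (L q).2.2
  have hGmono : Monotone G := by
    intro q r hqr
    exact le_of_tendsto_of_tendsto' (hG q) (hG r)
      (fun k => cdf'_mono (μs (φ k)) (by exact_mod_cast hqr))
  -- define F
  have hne : ∀ x : ℝ, Nonempty {q : ℚ // x < (q:ℝ)} := by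
    intro x; obtain ⟨q, hq⟩ := exists_rat_gt x; exact ⟨⟨q, hq⟩⟩
  set F : ℝ → ℝ := fun x => ⨅ q : {q : ℚ // x < (q:ℝ)}, G q with hFdef
  have hbdd : ∀ x : ℝ, BddBelow (Set.range fun q : {q : ℚ // x < (q:ℝ)} => G q) :=
    fun x => ⟨0, by rintro y ⟨q, rfl⟩; exact hG0 q⟩
  have hFle : ∀ (x : ℝ) (q : ℚ), x < (q:ℝ) → F x ≤ G q := by
    intro x q hq
    haveI := hne x
    exact ciInf_le (hbdd x) ⟨q, hq⟩
  have hleF : ∀ (x : ℝ) (c : ℝ), (∀ q : ℚ, x < (q:ℝ) → c ≤ G q) → c ≤ F x := by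
    intro x c hc
    haveI := hne x
    exact le_ciInf fun q => hc q q.2
  have hF0 : ∀ x, 0 ≤ F x := fun x => hleF x 0 fun q _ => hG0 q
  have hF1 : ∀ x, F x ≤ 1 := by
    intro x
    obtain ⟨q, hq⟩ := exists_rat_gt x
    exact (hFle x q hq).trans (hG1 q)
  have hFmono : Monotone F := fun x y hxy =>
    hleF y (F x) fun q hq => hFle x q (hxy.trans_lt hq)
  -- right continuity
  have hFrc : ∀ x : ℝ, ContinuousWithinAt F (Set.Ici x) x := by
    intro x
    rw [Metric.continuousWithinAt_iff]
    intro ε hε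
    have hlt : F x < F x + ε := lt_add_of_pos_right _ hε
    haveI := hne x
    obtain ⟨⟨q, hq⟩, hGq⟩ := exists_lt_of_ciInf_lt (hFdef ▸ hlt)
    refine ⟨(q:ℝ) - x, by linarith, ?_⟩
    intro y hy hdy
    have hyq : y < (q:ℝ) := by
      rw [Real.dist_eq, abs_lt] at hdy
      linarith [hdy.2]
    have h1 : F y ≤ G q := hFle y q hyq
    have h2 : F x ≤ F y := hFmono hy
    rw [Real.dist_eq, abs_lt]
    constructor <;> linarith
  set Fs : StieltjesFunction ℝ := ⟨F, hFmono, hFrc⟩ with hFsdef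
  -- limits at infinity
  have hbot : Tendsto F atBot (𝓝 0) := by
    rw [tendsto_order]
    constructor
    · intro c hc
      exact Eventually.of_forall fun x => lt_of_lt_of_le hc (hF0 x)
    · intro c hc
      obtain ⟨a, b, hab⟩ := htight (c/2) (by linarith)
      rw [eventually_atBot]
      obtain ⟨q, hq1, hq2⟩ := exists_rat_btwn (show a - 1 < a by linarith)
      refine ⟨a - 1, fun x hx => ?_⟩
      have hGq : G q ≤ c/2 := by
        refine le_of_tendsto (hG q) (Eventually.of_forall fun k => ?_)
        have := cdf'_add_Icc_le (μs (φ k)) (x := (q:ℝ)) (a := a) (b := b) hq2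
        have h2 := hab (φ k)
        linarith
      have : F x ≤ G q := hFle x q (lt_of_le_of_lt hx hq1)
      linarith
  have htop : Tendsto F atTop (𝓝 1) := by
    rw [tendsto_order]
    constructor
    · intro c hc
      obtain ⟨a, b, hab⟩ := htight ((1 - c)/2) (by linarith)
      rw [eventually_atTop]
      refine ⟨b, fun x hx => ?_⟩
      have h1 : 1 - (1-c)/2 ≤ F x := by
        refine hleF x _ fun q hq => ?_
        refine ge_of_tendsto (hG q) (Eventually.of_forall fun k => ?_)
        have h2 := hab (φ k)
        have h3 : ((μs (φ k)) (Set.Icc a b)).toReal ≤ cdf' (μs (φ k)) q :=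
          Icc_le_cdf' _ (le_of_lt (lt_of_le_of_lt hx hq))
        linarith
      linarith
    · intro c hc
      exact Eventually.of_forall fun x => lt_of_le_of_lt (hF1 x) hc
  -- the measure
  refine ⟨φ, Fs.measure, hφ, ?_, ?_⟩
  · exact ⟨by rw [Fs.measure_univ hbot htop]; simp⟩
  · have hcdf : cdf' Fs.measure = F := by
      funext x
      rw [cdf', Fs.measure_Iic hbot x, sub_zero, ENNReal.toReal_ofReal (hF0 x)]
    intro x hx
    rw [hcdf] at hx ⊢
    rw [Metric.tendsto_atTop]
    intro ε hε
    -- choose r : rational above x with G r < F x + ε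
    have hlt : F x < F x + ε := lt_add_of_pos_right _ hε
    haveI := hne x
    obtain ⟨⟨r, hr⟩, hGr⟩ := exists_lt_of_ciInf_lt (hFdef ▸ hlt)
    -- choose y < x with F y > F x - ε, then rational q in (y, x)
    rw [Metric.continuousAt_iff] at hx
    obtain ⟨δ, hδ, hx⟩ := hx ε hε
    have hyx : x - δ/2 < x := by linarith
    have hFy : F x - ε < F (x - δ/2) := by
      have hd : dist (x - δ/2) x < δ := by
        rw [Real.dist_eq, abs_lt]; constructor <;> linarith
      have := hx hd
      rw [Real.dist_eq, abs_lt] at this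
      linarith [this.1]
    obtain ⟨q, hq1, hq2⟩ := exists_rat_btwn hyx
    have hGq : F x - ε < G q := lt_of_lt_of_le hFy (hFle _ q hq1)
    have hev1 : ∀ᶠ k in atTop, F x - ε < cdf' (μs (φ k)) q :=
      (hG q).eventually (eventually_gt_nhds hGq)
    have hev2 : ∀ᶠ k in atTop, cdf' (μs (φ k)) r < F x + ε :=
      (hG r).eventually (eventually_lt_nhds hGr)
    obtain ⟨N, hN⟩ := (hev1.and hev2).exists_forall_of_atTop
    refine ⟨N, fun k hk => ?_⟩
    obtain ⟨h1, h2⟩ := hN k hk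
    have hm1 : cdf' (μs (φ k)) q ≤ cdf' (μs (φ k)) x := cdf'_mono _ (le_of_lt hq2)
    have hm2 : cdf' (μs (φ k)) x ≤ cdf' (μs (φ k)) r := cdf'_mono _ (le_of_lt hr)
    rw [Real.dist_eq, abs_lt]
    constructor <;> linarith
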